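/- arXiv:2112.13376 — 3 statements merged into one kernel-verified Lean document; each statement's English description precedes it below -/
import Mathlib

section
/- Let p ∉ {2,5} be a prime, α ≥ 1 and k, L ≥ 1 integers. Then p^α divides ρ_{k,L} if and only if h_{p^α,L} divides k. -/
def rho (k L : ℕ) : ℕ := ∑ i ∈ Finset.range k, 10 ^ (L * i)

/-- `h p α L` is the multiplicative order of `10^L` modulo `p^(α + ord_p(10^L - 1))`. -/
noncomputable def h (p α L : ℕ) : ℕ :=
  orderOf ((10 : ZMod (p ^ (α + padicValNat p (10 ^ L - 1)))) ^ L)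

/-! Multiplying `ρ_{k,L}` by `10^L - 1` turns the repunit-type sum into `10^(Lk) - 1`. The
factor `10^L - 1` raises every `p`-adic valuation by exactly `ord_p(10^L - 1)`, so
`p^α ∣ ρ_{k,L}` becomes `p^(α + ord_p(10^L - 1)) ∣ (10^L)^k - 1`, which says that `10^L` has
order dividing `k` modulo that prime power. -/

lemma rho_mul_pow_sub_one (k L : ℕ) : rho k L * (10 ^ L - 1) = (10 ^ L) ^ k - 1 := by
  simp only [rho, pow_mul]
  exact geom_sum_mul_of_one_le (Nat.one_le_pow _ _ (by norm_num)) k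

lemma pow_dvd_iff_pow_add_padicValNat_dvd_mul {p : ℕ} [Fact p.Prime] {n : ℕ} (hn : n ≠ 0)
    (α a : ℕ) : p ^ α ∣ a ↔ p ^ (α + padicValNat p n) ∣ a * n := by
  rcases eq_or_ne a 0 with rfl | ha
  · simp
  rw [padicValNat_dvd_iff_le ha, padicValNat_dvd_iff_le (mul_ne_zero ha hn),
    padicValNat.mul ha hn, Nat.add_le_add_iff_right]

lemma orderOf_natCast_dvd_iff_dvd_pow_sub_one {n a : ℕ} (ha : 0 < a) (k : ℕ) :
    orderOf (a : ZMod n) ∣ k ↔ n ∣ a ^ k - 1 := by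
  rw [orderOf_dvd_iff_pow_eq_one, ← Nat.cast_pow, ← Nat.cast_one, eq_comm,
    ZMod.natCast_eq_natCast_iff, Nat.modEq_iff_dvd' (Nat.one_le_pow _ _ ha)]

theorem pow_dvd_rho_iff_general (p : ℕ) (hp : p.Prime)
    (α k L : ℕ) (hL : 1 ≤ L) :
    p ^ α ∣ rho k L ↔ h p α L ∣ k := by
  have := Fact.mk hp
  have hne : 10 ^ L - 1 ≠ 0 :=
    Nat.sub_ne_zero_of_lt (Nat.one_lt_pow (by omega) (by norm_num))
  rw [pow_dvd_iff_pow_add_padicValNat_dvd_mul hne, rho_mul_pow_sub_one, h]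
  exact_mod_cast (orderOf_natCast_dvd_iff_dvd_pow_sub_one (a := 10 ^ L) (by positivity) k).symm

theorem pow_dvd_rho_iff (p : ℕ) (hp : p.Prime) (hp2 : p ≠ 2) (hp5 : p ≠ 5)
    (α k L : ℕ) (hα : 1 ≤ α) (hk : 1 ≤ k) (hL : 1 ≤ L) :
    p ^ α ∣ rho k L ↔ h p α L ∣ k :=
  pow_dvd_rho_iff_general p hp α k L hL
end

section
/- Let n ≥ 1 be an integer with 10 ∤ n and with L decimal digits, and let k ≥ 1. Then the decimal digit reversal of n(k) = n · ρ_{k,L} equals r(n) · ρ_{k,L}, where r(n) is the decimal digit reversal of n. -/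
/-- decimal digit reversal -/
def r (n : ℕ) : ℕ := Nat.ofDigits 10 (Nat.digits 10 n).reverse

/-! The digit string of `n * ρ_{k,L}` is `k` copies of the digits of `n`: the copies of `n` are
shifted by multiples of `10 ^ L`, with `L` the number of digits of `n`, so they do not overlap. Reversing `k` copies of a block gives `k` copies of the
reversed block, which is again of length `L` and so reads as `r n * ρ_{k,L}`. -/

open Finset

theorem rho_eq_geom_sum (k L : ℕ) : rho k L = ∑ i ∈ range k, (10 ^ L) ^ i := by
  simp only [rho, pow_mul]

namespace Nat

theorem ofDigits_flatten_replicate (b k : ℕ) (l : List ℕ) :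
    ofDigits b (List.replicate k l).flatten = ofDigits b l * ∑ i ∈ range k, (b ^ l.length) ^ i := by
  induction k with
  | zero => simp
  | succ k ih =>
    rw [List.replicate_succ, List.flatten_cons, ofDigits_append, ih, geom_sum_succ]
    ring

theorem digits_mul_geom_sum {b : ℕ} (hb : 0 < b) (n k : ℕ) :
    digits b (n * ∑ i ∈ range k, (b ^ (digits b n).length) ^ i) =
      (List.replicate k (digits b n)).flatten := by
  induction k with
  | zero => simp
  | succ k ih =>
    rw [List.replicate_succ, List.flatten_cons, ← ih, digits_append_digits hb, geom_sum_succ]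
    ring_nf

end Nat

theorem reverse_repConcat_general (n L k : ℕ)
    (hL : (Nat.digits 10 n).length = L) :
    r (n * rho k L) = r n * rho k L := by
  have hlen : (Nat.digits 10 n).reverse.length = L := by rw [List.length_reverse, hL]
  rw [r, rho_eq_geom_sum, ← hL, Nat.digits_mul_geom_sum (by norm_num), hL, List.reverse_flatten,
    List.map_replicate, List.reverse_replicate, Nat.ofDigits_flatten_replicate, hlen, ← r]

theorem reverse_repConcat (n L k : ℕ) (hn : 1 ≤ n) (hten : ¬ 10 ∣ n)
    (hL : (Nat.digits 10 n).length = L) (hk : 1 ≤ k) :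
    r (n * rho k L) = r n * rho k L :=
  reverse_repConcat_general n L k hL
end

section
/- Let n ≥ 1 with 10 ∤ n and L decimal digits, k ≥ 1, and let p be a prime. Then p divides exactly one of n(k) and r(n)·ρ_{k,L} to different exponents (i.e., ord_p(n(k)) ≠ ord_p(r(n(k)))) if and only if ord_p(n) ≠ ord_p(r(n)). Hence the set of 'crucial primes' of n(k) equals that of n. -/
lemma rho_ne_zero (L : ℕ) {k : ℕ} (hk : 1 ≤ k) : rho k L ≠ 0 :=
  (Finset.sum_pos (fun _ _ => by positivity) ⟨0, Finset.mem_range.2 hk⟩).ne'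

/-- The leading digit of `n` is nonzero, and it becomes a digit of `r n`. -/
lemma r_ne_zero {n : ℕ} (hn : n ≠ 0) : r n ≠ 0 := fun h =>
  Nat.getLast_digit_ne_zero 10 hn <| Nat.digits_zero_of_eq_zero (by norm_num) h _ <|
    List.mem_reverse.2 (List.getLast_mem _)

lemma padicValNat_mul_right_ne_iff {p a b c : ℕ} [Fact p.Prime] (ha : a ≠ 0) (hb : b ≠ 0)
    (hc : c ≠ 0) :
    padicValNat p (a * c) ≠ padicValNat p (b * c) ↔ padicValNat p a ≠ padicValNat p b := by
  rw [padicValNat.mul ha hc, padicValNat.mul hb hc]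
  omega

theorem crucial_primes_invariant_general (n L k p : ℕ) (hn : 1 ≤ n)
    (hk : 1 ≤ k) (hp : p.Prime) :
    padicValNat p (n * rho k L) ≠ padicValNat p (r n * rho k L) ↔
      padicValNat p n ≠ padicValNat p (r n) :=
  have : Fact p.Prime := ⟨hp⟩
  padicValNat_mul_right_ne_iff (by omega) (r_ne_zero (by omega)) (rho_ne_zero L hk)

theorem crucial_primes_invariant (n L k p : ℕ) (hn : 1 ≤ n) (hten : ¬ 10 ∣ n)
    (hL : (Nat.digits 10 n).length = L) (hk : 1 ≤ k) (hp : p.Prime) :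
    padicValNat p (n * rho k L) ≠ padicValNat p (r n * rho k L) ↔
      padicValNat p n ≠ padicValNat p (r n) :=
  crucial_primes_invariant_general n L k p hn hk hp
end
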